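/- Let X be a compact metric space and {E_i}_{i∈ℕ} a sequence of connected subsets of X. If the lower limit lim inf E_i (the set of x ∈ X such that every open set containing x meets E_i for all but finitely many i) is nonempty, then the upper limit lim sup E_i (the set of x ∈ X such that every open set containing x meets E_i for infinitely many i) is connected. -/

import Mathlib

/-! Suppose the upper limit `L` splits into disjoint closed pieces `A ∋ x₀` and `B ≠ ∅`, where
`x₀` lies in the lower limit, and separate them by disjoint open sets `U ⊇ A`, `V ⊇ B`. Infinitely many `E i`
meet `V`, and all but finitely many meet `U`, so infinitely many meet both; being connected, each
of these meets the compact set `(U ∪ V)ᶜ`, which therefore contains a point of `L`. This is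
impossible since `L ⊆ U ∪ V`. -/

open Set

/-- Topological upper limit of a sequence of sets. -/
def setLimsup {X : Type*} [TopologicalSpace X] (E : ℕ → Set X) : Set X :=
  {x | ∀ U : Set X, IsOpen U → x ∈ U → {i | (U ∩ E i).Nonempty}.Infinite}

/-- Topological lower limit of a sequence of sets. -/
def setLiminf {X : Type*} [TopologicalSpace X] (E : ℕ → Set X) : Set X :=
  {x | ∀ U : Set X, IsOpen U → x ∈ U → {i | ¬ (U ∩ E i).Nonempty}.Finite}

lemma setLiminf_subset_setLimsup {X : Type*} [TopologicalSpace X] (E : ℕ → Set X) :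
    setLiminf E ⊆ setLimsup E := by
  intro x hx U hU hxU
  simpa only [compl_ofPred, not_not] using (hx U hU hxU).infinite_compl

lemma isClosed_setLimsup {X : Type*} [TopologicalSpace X] (E : ℕ → Set X) :
    IsClosed (setLimsup E) := by
  rw [← isOpen_compl_iff, isOpen_iff_forall_mem_open]
  intro x hx
  simp only [setLimsup, mem_compl_iff, mem_ofPred_eq, not_forall] at hx
  obtain ⟨U, hU, hxU, hfin⟩ := hx
  exact ⟨U, fun y hy hyL => hfin (hyL U hU hy), hU, hxU⟩

lemma setLimsup_inter_nonempty_of_isCompact {X : Type*} [TopologicalSpace X] {E : ℕ → Set X}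
    {K : Set X} (hK : IsCompact K) (hI : {i | (E i ∩ K).Nonempty}.Infinite) :
    (setLimsup E ∩ K).Nonempty := by
  by_contra hKL
  have hnot : ∀ x ∈ K, ∃ U, IsOpen U ∧ x ∈ U ∧ {i | (U ∩ E i).Nonempty}.Finite := by
    intro x hxK
    by_contra! hall
    exact hKL ⟨x, fun U hU hxU => hall U hU hxU, hxK⟩
  choose! U hU hxU hfin using hnot
  obtain ⟨t, htK, hKt⟩ := hK.elim_nhds_subcover U fun x hx => (hU x hx).mem_nhds (hxU x hx)
  refine hI ((t.finite_toSet.biUnion fun x hx => hfin x (htK x hx)).subset ?_)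
  rintro i ⟨y, hyE, hyK⟩
  obtain ⟨x, hx, hyU⟩ := mem_iUnion₂.mp (hKt hyK)
  exact mem_iUnion₂.mpr ⟨x, hx, y, hyU, hyE⟩

lemma IsPreconnected.inter_compl_union_nonempty {X : Type*} [TopologicalSpace X] {s U V : Set X}
    (hs : IsPreconnected s) (hU : IsOpen U) (hV : IsOpen V) (hUV : Disjoint U V)
    (hsU : (s ∩ U).Nonempty) (hsV : (s ∩ V).Nonempty) : (s ∩ (U ∪ V)ᶜ).Nonempty := by
  by_contra hgap
  have hsUV : s ⊆ U ∪ V := fun z hz => by_contra fun hzUV => hgap ⟨z, hz, hzUV⟩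
  obtain ⟨z, -, hzU, hzV⟩ := hs U V hU hV hsUV hsU hsV
  exact disjoint_left.mp hUV hzU hzV

lemma setLimsup_subset_of_mem_setLiminf {X : Type*} [TopologicalSpace X] [CompactSpace X]
    {E : ℕ → Set X} (hE : ∀ i, IsPreconnected (E i)) {U V : Set X} (hU : IsOpen U)
    (hV : IsOpen V) (hUV : Disjoint U V) (hLUV : setLimsup E ⊆ U ∪ V) {x : X}
    (hx : x ∈ setLiminf E) (hxU : x ∈ U) : setLimsup E ⊆ U := by
  intro y hyL
  by_contra hyU
  have hyV : y ∈ V := (hLUV hyL).resolve_left hyU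
  have hcross : ∀ i ∈ {i | (V ∩ E i).Nonempty} \ {i | ¬ (U ∩ E i).Nonempty},
      (E i ∩ (U ∪ V)ᶜ).Nonempty := by
    rintro i ⟨hiV, hiU⟩
    rw [mem_ofPred_eq, not_not] at hiU
    exact (hE i).inter_compl_union_nonempty hU hV hUV (inter_comm U _ ▸ hiU)
      (inter_comm V _ ▸ hiV)
  have hinf := ((hyL V hV hyV).sdiff (hx U hU hxU)).mono hcross
  obtain ⟨z, hzL, hzgap⟩ :=
    setLimsup_inter_nonempty_of_isCompact (hU.union hV).isClosed_compl.isCompact hinf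
  exact hzgap (hLUV hzL)

theorem stmt13 {X : Type*} [MetricSpace X] [CompactSpace X]
    (E : ℕ → Set X) (hE : ∀ i, IsConnected (E i))
    (h : (setLiminf E).Nonempty) :
    IsConnected (setLimsup E) := by
  obtain ⟨x₀, hx₀⟩ := h
  have hx₀L := setLiminf_subset_setLimsup E hx₀
  refine ⟨⟨x₀, hx₀L⟩, (isPreconnected_iff_subset_of_fully_disjoint_closed
    (isClosed_setLimsup E)).2 fun A B hA hB hLAB hAB => ?_⟩
  obtain ⟨U, V, hU, hV, hAU, hBV, hUV⟩ := normal_separation hA hB hAB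
  have hLUV : setLimsup E ⊆ U ∪ V := hLAB.trans (union_subset_union hAU hBV)
  have hEpre i := (hE i).isPreconnected
  rcases hLAB hx₀L with hx₀A | hx₀B
  · have hLU := setLimsup_subset_of_mem_setLiminf hEpre hU hV hUV hLUV hx₀ (hAU hx₀A)
    exact .inl fun y hy => (hLAB hy).resolve_right fun hyB =>
      disjoint_left.mp hUV (hLU hy) (hBV hyB)
  · have hLV := setLimsup_subset_of_mem_setLiminf hEpre hV hU hUV.symm
      (union_comm U V ▸ hLUV) hx₀ (hBV hx₀B)
    exact .inr fun y hy => (hLAB hy).resolve_left fun hyA =>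
      disjoint_left.mp hUV (hAU hyA) (hLV hy)
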